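/- (Nonvanishing of the eigenfunction derivative at the controlled end.) If λ is an eigenvalue of the Boussinesq spectral problem and φ is an associated eigenfunction, then φ'(l) ≠ 0. -/

import Mathlib

/-!
Put `M = σφ''` and `W = M' − qφ'`. Integrating the equation by parts against `φ`, the boundary
conditions give `λ ∫ ρφ² = ∫ σφ''² + ∫ qφ'²`, so `λ ≥ 0`. Then `(−φ, φ', −M, W)` solves a linear
system `f' = −A f` whose matrix `A` has nonnegative entries, so nonnegative data at `x = l` stay
nonnegative on all of `[0,l]` (the sum of the squared negative parts obeys a Grönwall inequality
backwards from `l`). If `φ'(l) = 0`, the data at `l` are `(0, 0, 0, W(l))`, and after replacing `φ`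
by `−φ` we may assume `W(l) ≥ 0`. Then `φ ≤ 0` and `φ' ≥ 0` on `[0,l]`, so `φ(0) = 0` forces
`φ = 0` on `[0,l]`.
-/

open Set intervalIntegral MeasureTheory Filter Topology

noncomputable section

/-- The fourth-order Boussinesq differential operator `φ ↦ (σ φ'')'' − (q φ')'`. -/
def boussinesqOp (σ q : ℝ → ℝ) (φ : ℝ → ℝ) : ℝ → ℝ :=
  fun x => deriv (deriv (fun t => σ t * deriv (deriv φ) t)) x
    - deriv (fun t => q t * deriv φ t) x

/-- `φ` is a (nontrivial) eigenfunction of the Boussinesq spectral problem on `[0,l]`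
with eigenvalue `lam`: it is `C⁴`, not identically zero on `[0,l]`, satisfies
`(σ φ'')'' − (q φ')' = lam ρ φ` on `[0,l]` and the boundary conditions
`φ(0) = φ''(0) = φ(l) = φ''(l) = 0`. -/
def IsBoussinesqEigenpair (σ q ρ : ℝ → ℝ) (l lam : ℝ) (φ : ℝ → ℝ) : Prop :=
  ContDiff ℝ 4 φ ∧ (∃ x ∈ Icc (0:ℝ) l, φ x ≠ 0) ∧
    (∀ x ∈ Icc (0:ℝ) l, boussinesqOp σ q φ x = lam * ρ x * φ x) ∧
    φ 0 = 0 ∧ deriv (deriv φ) 0 = 0 ∧ φ l = 0 ∧ deriv (deriv φ) l = 0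

/-- `lam` is an eigenvalue of the Boussinesq spectral problem on `[0,l]`. -/
def IsBoussinesqEigenvalue (σ q ρ : ℝ → ℝ) (l lam : ℝ) : Prop :=
  ∃ φ : ℝ → ℝ, IsBoussinesqEigenpair σ q ρ l lam φ

theorem monotoneOn_Icc_of_hasDerivAt_nonneg {f f' : ℝ → ℝ} {a b : ℝ}
    (hf : ∀ x ∈ Icc a b, HasDerivAt f (f' x) x) (hf' : ∀ x ∈ Icc a b, 0 ≤ f' x) :
    MonotoneOn f (Icc a b) :=
  monotoneOn_of_hasDerivWithinAt_nonneg (convex_Icc a b)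
    (fun x hx => (hf x hx).continuousAt.continuousWithinAt)
    (fun x hx => (hf x (interior_subset hx)).hasDerivWithinAt)
    (fun x hx => hf' x (interior_subset hx))

theorem hasDerivAt_min_zero_sq (t : ℝ) :
    HasDerivAt (fun s : ℝ => min s 0 ^ 2) (2 * min t 0) t := by
  refine hasDerivAt_of_hasDerivAt_of_ne' (g := fun s => 2 * min s 0) (x := 0) (fun y hy => ?_)
    (by fun_prop) (by fun_prop) t
  rcases hy.lt_or_gt with hy | hy
  · have hloc : (fun s : ℝ => min s 0 ^ 2) =ᶠ[𝓝 y] fun s => s ^ 2 := by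
      filter_upwards [gt_mem_nhds hy] with s hs
      rw [min_eq_left hs.le]
    rw [min_eq_left hy.le]
    simpa using (hasDerivAt_pow 2 y).congr_of_eventuallyEq hloc
  · have hloc : (fun s : ℝ => min s 0 ^ 2) =ᶠ[𝓝 y] fun _ => 0 := by
      filter_upwards [lt_mem_nhds hy] with s hs
      simp [min_eq_right hs.le]
    rw [min_eq_right hy.le]
    simpa using (hasDerivAt_const y (0 : ℝ)).congr_of_eventuallyEq hloc

theorem eqOn_zero_of_hasDerivAt_ge_neg_mul {F F' : ℝ → ℝ} {a b C : ℝ}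
    (hF : ∀ x ∈ Icc a b, HasDerivAt F (F' x) x) (hF' : ∀ x ∈ Icc a b, -(C * F x) ≤ F' x)
    (hF₀ : ∀ x ∈ Icc a b, 0 ≤ F x) (hFb : F b = 0) : EqOn F 0 (Icc a b) := by
  intro x hx
  have hmono : MonotoneOn (fun y => Real.exp (C * y) * F y) (Icc a b) := by
    refine monotoneOn_Icc_of_hasDerivAt_nonneg
      (fun y hy => (((hasDerivAt_id y).const_mul C).exp).mul (hF y hy)) fun y hy => ?_
    have hexp := Real.exp_pos (C * y)
    simp only [id, mul_one]
    nlinarith [hF' y hy]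
  have hle := hmono hx (right_mem_Icc.2 (hx.1.trans hx.2)) hx.2
  simp only [hFb, mul_zero] at hle
  exact le_antisymm (nonpos_of_mul_nonpos_right hle (Real.exp_pos _)) (hF₀ x hx)

theorem neg_mul_add_sq_min_zero_le {y z A K : ℝ} (hA : 0 ≤ A) (hAK : A ≤ K) :
    -(K * (min y 0 ^ 2 + min z 0 ^ 2)) ≤ 2 * min y 0 * -(A * z) := by
  have hy : min y 0 ≤ 0 := min_le_right y 0
  have hz : min z 0 ≤ 0 := min_le_right z 0
  nlinarith [mul_nonneg (mul_nonneg (neg_nonneg.2 hy) hA) (sub_nonneg.2 (min_le_left z 0)),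
    mul_nonneg (mul_nonneg (sub_nonneg.2 hAK) (neg_nonneg.2 hy)) (neg_nonneg.2 hz),
    mul_nonneg (hA.trans hAK) (sq_nonneg (min y 0 - min z 0))]

theorem nonneg_of_hasDerivAt_eq_neg_sum {n : ℕ} {a b : ℝ} {f : Fin n → ℝ → ℝ}
    {A : Fin n → Fin n → ℝ → ℝ}
    (hf : ∀ i, ∀ x ∈ Icc a b, HasDerivAt (f i) (-∑ j, A i j x * f j x) x)
    (hA : ∀ i j, ∀ x ∈ Icc a b, 0 ≤ A i j x) (hAc : ∀ i j, ContinuousOn (A i j) (Icc a b))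
    (hb : ∀ i, 0 ≤ f i b) (i : Fin n) {x : ℝ} (hx : x ∈ Icc a b) : 0 ≤ f i x := by
  obtain ⟨K, hK⟩ := isCompact_Icc.exists_bound_of_continuousOn
    (continuousOn_finsetSum _ fun i _ => continuousOn_finsetSum _ fun j _ => hAc i j)
  have hAK : ∀ i j, ∀ x ∈ Icc a b, A i j x ≤ K := fun i j x hx =>
    calc A i j x ≤ ∑ i, ∑ j, A i j x :=
          (Finset.single_le_sum (fun j _ => hA i j x hx) (Finset.mem_univ j)).trans
            (Finset.single_le_sum (f := fun i => ∑ j, A i j x)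
              (fun i _ => Finset.sum_nonneg fun j _ => hA i j x hx) (Finset.mem_univ i))
      _ ≤ K := (le_abs_self _).trans (hK x hx)
  set F : ℝ → ℝ := fun x => ∑ i, min (f i x) 0 ^ 2
  have hF : EqOn F 0 (Icc a b) := by
    refine eqOn_zero_of_hasDerivAt_ge_neg_mul (C := 2 * n * K)
      (fun x hx => HasDerivAt.fun_sum fun i _ => (hasDerivAt_min_zero_sq _).comp x (hf i x hx))
      (fun x hx => ?_) (fun x _ => Finset.sum_nonneg fun i _ => sq_nonneg _)
      (Finset.sum_eq_zero fun i _ => by simp [min_eq_right (hb i)])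
    calc -(2 * n * K * F x)
        = ∑ i, ∑ j, -(K * (min (f i x) 0 ^ 2 + min (f j x) 0 ^ 2)) := by
          simp only [F, Finset.sum_neg_distrib, ← Finset.mul_sum, Finset.sum_add_distrib,
            Finset.sum_const, Finset.card_univ, Fintype.card_fin, nsmul_eq_mul]
          ring
      _ ≤ ∑ i, 2 * min (f i x) 0 * -∑ j, A i j x * f j x := by
          refine Finset.sum_le_sum fun i _ => ?_
          rw [← Finset.sum_neg_distrib, Finset.mul_sum]
          exact Finset.sum_le_sum fun j _ =>
            neg_mul_add_sq_min_zero_le (hA i j x hx) (hAK i j x hx)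
  have hsq : min (f i x) 0 ^ 2 = 0 :=
    (Finset.sum_eq_zero_iff_of_nonneg fun i _ => sq_nonneg _).1 (hF hx) i (Finset.mem_univ i)
  simpa using hsq

theorem eqOn_zero_of_beam_system {a b : ℝ} {u u₁ M W σ q P : ℝ → ℝ}
    (hu : ∀ x ∈ Icc a b, HasDerivAt u (u₁ x) x)
    (hu₁ : ∀ x ∈ Icc a b, HasDerivAt u₁ (M x / σ x) x)
    (hM : ∀ x ∈ Icc a b, HasDerivAt M (W x + q x * u₁ x) x)
    (hW : ∀ x ∈ Icc a b, HasDerivAt W (P x * u x) x)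
    (hσ : ∀ x ∈ Icc a b, 0 < σ x) (hq : ∀ x ∈ Icc a b, 0 ≤ q x) (hP : ∀ x ∈ Icc a b, 0 ≤ P x)
    (hσc : ContinuousOn σ (Icc a b)) (hqc : ContinuousOn q (Icc a b))
    (hPc : ContinuousOn P (Icc a b))
    (hub : u b = 0) (hu₁b : u₁ b = 0) (hMb : M b = 0) (hua : u a = 0) :
    EqOn u 0 (Icc a b) := by
  wlog hWb : 0 ≤ W b generalizing u u₁ M W with hneg
  · intro x hx
    simpa using hneg (u := fun x => -u x) (u₁ := fun x => -u₁ x) (M := fun x => -M x)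
      (W := fun x => -W x) (fun x hx => (hu x hx).neg)
      (fun x hx => (hu₁ x hx).neg.congr_deriv (neg_div _ _).symm)
      (fun x hx => (hM x hx).neg.congr_deriv (by ring))
      (fun x hx => (hW x hx).neg.congr_deriv (mul_neg _ _).symm)
      (by simp [hub]) (by simp [hu₁b]) (by simp [hMb]) (by simp [hua]) (by linarith) hx
  have hcoop := nonneg_of_hasDerivAt_eq_neg_sum (a := a) (b := b)
    (f := ![fun x => -u x, u₁, fun x => -M x, W])
    (A := fun i j x => !![0, 1, 0, 0; 0, 0, (σ x)⁻¹, 0; 0, q x, 0, 1; P x, 0, 0, 0] i j)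
    (fun i x hx => by
      fin_cases i <;> simp [Fin.sum_univ_four]
      · exact (hu x hx).neg
      · simpa [div_eq_inv_mul] using hu₁ x hx
      · exact (hM x hx).neg.congr_deriv (by ring)
      · exact hW x hx)
    (fun i j x hx => by
      fin_cases i <;> fin_cases j <;> simp [(hσ x hx).le, hq x hx, hP x hx])
    (fun i j => by
      fin_cases i <;> fin_cases j <;> simp [continuousOn_const, hqc, hPc]
      exact hσc.inv₀ fun x hx => (hσ x hx).ne')
    (fun i => by fin_cases i <;> simp [hub, hu₁b, hMb, hWb])
  intro x hx
  have hu_nonpos : u x ≤ 0 := by simpa using hcoop 0 hx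
  have hua_le : u a ≤ u x :=
    monotoneOn_Icc_of_hasDerivAt_nonneg hu (fun y hy => by simpa using hcoop 1 hy)
      (left_mem_Icc.2 (hx.1.trans hx.2)) hx hx.1
  exact le_antisymm hu_nonpos (hua ▸ hua_le : 0 ≤ u x)

def bendingMoment (σ φ : ℝ → ℝ) (x : ℝ) : ℝ := σ x * deriv (deriv φ) x

def shearForce (σ q φ : ℝ → ℝ) (x : ℝ) : ℝ := deriv (bendingMoment σ φ) x - q x * deriv φ x

namespace IsBoussinesqEigenpair

variable {σ q ρ φ : ℝ → ℝ} {l lam : ℝ}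

theorem length_pos (h : IsBoussinesqEigenpair σ q ρ l lam φ) : 0 < l := by
  obtain ⟨_, ⟨x, hx, hφx⟩, _, hφ0, -⟩ := h
  exact (lt_of_le_of_ne hx.1 fun h0 => hφx (h0 ▸ hφ0)).trans_le hx.2

theorem hasDerivAt (h : IsBoussinesqEigenpair σ q ρ l lam φ) (x : ℝ) :
    HasDerivAt φ (deriv φ x) x :=
  (h.1.differentiable (by norm_num) x).hasDerivAt

theorem contDiff_deriv (h : IsBoussinesqEigenpair σ q ρ l lam φ) : ContDiff ℝ 3 (deriv φ) :=
  h.1.deriv'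

theorem hasDerivAt_deriv (h : IsBoussinesqEigenpair σ q ρ l lam φ) (x : ℝ) :
    HasDerivAt (deriv φ) (deriv (deriv φ) x) x :=
  (h.contDiff_deriv.differentiable (by norm_num) x).hasDerivAt

theorem contDiff_bendingMoment (h : IsBoussinesqEigenpair σ q ρ l lam φ)
    (hσ : ContDiff ℝ 2 σ) : ContDiff ℝ 2 (bendingMoment σ φ) := by
  have hφ := h.1
  unfold bendingMoment
  fun_prop

theorem hasDerivAt_bendingMoment (h : IsBoussinesqEigenpair σ q ρ l lam φ)
    (hσ : ContDiff ℝ 2 σ) (x : ℝ) :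
    HasDerivAt (bendingMoment σ φ) (shearForce σ q φ x + q x * deriv φ x) x := by
  rw [shearForce, sub_add_cancel]
  exact (h.contDiff_bendingMoment hσ |>.differentiable (by norm_num) x).hasDerivAt

theorem hasDerivAt_shearForce (h : IsBoussinesqEigenpair σ q ρ l lam φ)
    (hσ : ContDiff ℝ 2 σ) (hq : ContDiff ℝ 1 q) {x : ℝ} (hx : x ∈ Icc 0 l) :
    HasDerivAt (shearForce σ q φ) (lam * ρ x * φ x) x := by
  rw [← h.2.2.1 x hx]
  have hqφ : ContDiff ℝ 1 fun t => q t * deriv φ t := hq.mul (h.contDiff_deriv.of_le (by norm_num))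
  exact ((h.contDiff_bendingMoment hσ).differentiable_deriv_two x).hasDerivAt.sub
    (hqφ.differentiable one_ne_zero x).hasDerivAt

theorem continuous_shearForce (h : IsBoussinesqEigenpair σ q ρ l lam φ)
    (hσ : ContDiff ℝ 2 σ) (hq : ContDiff ℝ 1 q) : Continuous (shearForce σ q φ) :=
  ((h.contDiff_bendingMoment hσ).continuous_deriv (by norm_num)).sub
    (hq.continuous.mul h.contDiff_deriv.continuous)

theorem eigenvalue_mul_integral_eq (h : IsBoussinesqEigenpair σ q ρ l lam φ)
    (hσ : ContDiff ℝ 2 σ) (hq : ContDiff ℝ 1 q) (hρ : Continuous ρ) :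
    lam * ∫ x in 0..l, ρ x * φ x ^ 2
      = (∫ x in 0..l, σ x * deriv (deriv φ) x ^ 2) + ∫ x in 0..l, q x * deriv φ x ^ 2 := by
  have hIcc : uIcc 0 l = Icc 0 l := uIcc_of_le h.length_pos.le
  have hφc : Continuous φ := h.1.continuous
  have hφ' : Continuous (deriv φ) := h.contDiff_deriv.continuous
  have hφ'' : Continuous (deriv (deriv φ)) := h.contDiff_deriv.continuous_deriv (by norm_num)
  have hW := h.continuous_shearForce hσ hq
  have parts₁ := integral_mul_deriv_eq_deriv_mul (fun x _ => h.hasDerivAt x)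
    (fun x hx => h.hasDerivAt_shearForce hσ hq (hIcc ▸ hx))
    (hφ'.intervalIntegrable 0 l)
    ((by fun_prop : Continuous fun x => lam * ρ x * φ x).intervalIntegrable 0 l)
  have parts₂ := integral_mul_deriv_eq_deriv_mul (fun x _ => h.hasDerivAt_deriv x)
    (fun x _ => h.hasDerivAt_bendingMoment hσ x)
    (hφ''.intervalIntegrable 0 l) ((hW.add (hq.continuous.mul hφ')).intervalIntegrable 0 l)
  obtain ⟨-, -, -, hφ0, hφ''0, hφl, hφ''l⟩ := h
  simp only [bendingMoment, hφ0, hφl, hφ''0, hφ''l, zero_mul, mul_zero, sub_zero, zero_sub]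
    at parts₁ parts₂
  calc lam * ∫ x in 0..l, ρ x * φ x ^ 2
      = ∫ x in 0..l, φ x * (lam * ρ x * φ x) := by
        rw [← intervalIntegral.integral_const_mul]; congr 1; ext x; ring
    _ = (∫ x in 0..l, q x * deriv φ x ^ 2)
          - ∫ x in 0..l, deriv φ x * (shearForce σ q φ x + q x * deriv φ x) := by
        rw [parts₁, ← intervalIntegral.integral_sub
          ((by fun_prop : Continuous fun x => q x * deriv φ x ^ 2).intervalIntegrable 0 l)
          ((by fun_prop : Continuous fun x =>
            deriv φ x * (shearForce σ q φ x + q x * deriv φ x)).intervalIntegrable 0 l),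
          ← intervalIntegral.integral_neg]
        congr 1; ext x; ring
    _ = _ := by
        rw [parts₂, sub_neg_eq_add, add_comm]
        congr 1
        exact integral_congr fun x _ => by ring

theorem eigenvalue_nonneg (h : IsBoussinesqEigenpair σ q ρ l lam φ)
    (hσ : ContDiff ℝ 2 σ) (hq : ContDiff ℝ 1 q) (hρ : Continuous ρ)
    (hρ₀ : ∀ x ∈ Icc 0 l, 0 < ρ x) (hσ₀ : ∀ x ∈ Icc 0 l, 0 ≤ σ x)
    (hq₀ : ∀ x ∈ Icc 0 l, 0 ≤ q x) : 0 ≤ lam := by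
  obtain ⟨x₀, hx₀, hφx₀⟩ := h.2.1
  have hφc : Continuous φ := h.1.continuous
  have hmass : 0 < ∫ x in 0..l, ρ x * φ x ^ 2 :=
    integral_pos h.length_pos (by fun_prop)
      (fun x hx => mul_nonneg (hρ₀ x (Ioc_subset_Icc_self hx)).le (sq_nonneg _))
      ⟨x₀, hx₀, mul_pos (hρ₀ x₀ hx₀) (by positivity)⟩
  have henergy :
      0 ≤ (∫ x in 0..l, σ x * deriv (deriv φ) x ^ 2) + ∫ x in 0..l, q x * deriv φ x ^ 2 :=
    add_nonneg (integral_nonneg h.length_pos.le fun x hx => mul_nonneg (hσ₀ x hx) (sq_nonneg _))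
      (integral_nonneg h.length_pos.le fun x hx => mul_nonneg (hq₀ x hx) (sq_nonneg _))
  rw [← h.eigenvalue_mul_integral_eq hσ hq hρ] at henergy
  exact nonneg_of_mul_nonneg_left henergy hmass

theorem eqOn_zero_of_deriv_eq_zero (h : IsBoussinesqEigenpair σ q ρ l lam φ)
    (hσ : ContDiff ℝ 2 σ) (hq : ContDiff ℝ 1 q) (hρ : Continuous ρ)
    (hσ₀ : ∀ x ∈ Icc 0 l, 0 < σ x) (hq₀ : ∀ x ∈ Icc 0 l, 0 ≤ q x)
    (hP : ∀ x ∈ Icc 0 l, 0 ≤ lam * ρ x) (hφ'l : deriv φ l = 0) : EqOn φ 0 (Icc 0 l) := by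
  have ⟨_, _, _, hφ0, _, hφl, hφ''l⟩ := h
  refine eqOn_zero_of_beam_system (P := fun x => lam * ρ x) (fun x _ => h.hasDerivAt x)
    (fun x hx => ?_) (fun x _ => h.hasDerivAt_bendingMoment hσ x)
    (fun x hx => h.hasDerivAt_shearForce hσ hq hx) hσ₀ hq₀ hP hσ.continuous.continuousOn
    hq.continuous.continuousOn (by fun_prop) hφl hφ'l (by simp [bendingMoment, hφ''l]) hφ0
  rw [bendingMoment, mul_div_cancel_left₀ _ (hσ₀ x hx).ne']
  exact h.hasDerivAt_deriv x

end IsBoussinesqEigenpair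

theorem boussinesq_eigenfunction_deriv_ne_zero_general
    (l : ℝ)
    (ρ σ q : ℝ → ℝ)
    (hρs : ContDiff ℝ 3 ρ) (hσs : ContDiff ℝ 3 σ) (hqs : ContDiff ℝ 1 q)
    (ρ0 σ0 : ℝ) (hρ0 : 0 < ρ0) (hσ0 : 0 < σ0)
    (hρb : ∀ x ∈ Icc (0:ℝ) l, ρ0 ≤ ρ x)
    (hσb : ∀ x ∈ Icc (0:ℝ) l, σ0 ≤ σ x)
    (hqb : ∀ x ∈ Icc (0:ℝ) l, 0 ≤ q x)
    (lam : ℝ) (φ : ℝ → ℝ)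
    (hφ : IsBoussinesqEigenpair σ q ρ l lam φ) :
    deriv φ l ≠ 0 := by
  have hσ : ContDiff ℝ 2 σ := hσs.of_le (by norm_num)
  have hσ₀ : ∀ x ∈ Icc 0 l, 0 < σ x := fun x hx => hσ0.trans_le (hσb x hx)
  have hρ₀ : ∀ x ∈ Icc 0 l, 0 < ρ x := fun x hx => hρ0.trans_le (hρb x hx)
  have hlam : 0 ≤ lam :=
    hφ.eigenvalue_nonneg hσ hqs hρs.continuous hρ₀ (fun x hx => (hσ₀ x hx).le) hqb
  obtain ⟨x₀, hx₀, hφx₀⟩ := hφ.2.1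
  intro hφ'l
  exact hφx₀ (hφ.eqOn_zero_of_deriv_eq_zero hσ hqs hρs.continuous hσ₀ hqb
    (fun x hx => mul_nonneg hlam (hρ₀ x hx).le) hφ'l hx₀)

/-- **Nonvanishing of the eigenfunction derivative at the controlled end.** If `lam` is
an eigenvalue with eigenfunction `φ`, then `φ'(l) ≠ 0`. -/
theorem boussinesq_eigenfunction_deriv_ne_zero
    (l : ℝ) (hl : 0 < l)
    (ρ σ q : ℝ → ℝ)
    (hρs : ContDiff ℝ 3 ρ) (hσs : ContDiff ℝ 3 σ) (hqs : ContDiff ℝ 1 q)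
    (ρ0 σ0 : ℝ) (hρ0 : 0 < ρ0) (hσ0 : 0 < σ0)
    (hρb : ∀ x ∈ Icc (0:ℝ) l, ρ0 ≤ ρ x)
    (hσb : ∀ x ∈ Icc (0:ℝ) l, σ0 ≤ σ x)
    (hqb : ∀ x ∈ Icc (0:ℝ) l, 0 ≤ q x)
    (lam : ℝ) (φ : ℝ → ℝ)
    (hφ : IsBoussinesqEigenpair σ q ρ l lam φ) :
    deriv φ l ≠ 0 :=
  boussinesq_eigenfunction_deriv_ne_zero_general l ρ σ q hρs hσs hqs ρ0 σ0 hρ0 hσ0 hρb hσb hqb lam φ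
    hφ
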